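/- arXiv:1710.05123 — 4 statements merged into one kernel-verified Lean document; each statement's English description precedes it below -/
import Mathlib

section
/- Suppose depth R = 0 and M is a nonzero finitely generated R-module lying in ΩDeep(R) (when depth R = 0, Deep(R) consists of all finitely generated R-modules, so M ∈ ΩDeep(R) means there is a short exact sequence 0 → M → R^n → X → 0 with X finitely generated). Then the following are equivalent: (1) M has a free direct summand; (2) M is faithful, i.e. Ann_R(M) = 0; (3) Soc(R) is not contained in Ann_R(M), i.e. Soc(R)·M ≠ 0; (4) M is not a minimal syzygy, i.e. there is no short exact sequence 0 → M → R^{μ(X)} → X → 0 with X a finitely generated R-module. -/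
/-!
When `depth R = 0`, no element of `𝔪` is `R`-regular: a regular sequence in `𝔪` is no longer
than `dim R`, so the supremum defining `rdepth` (which is `0` for unbounded sets of naturals)
is an honest maximum. By prime avoidance over the finitely many associated primes, `𝔪` is then
annihilated by some `u ≠ 0`, i.e. `Soc(R) ≠ 0`.

For an embedding `f : M → Rⁿ` there are two cases. If some coordinate `f x i` is a unit, then
the `i`-th projection splits off a free summand `R · x`, and the cokernel is generated by the
images of the other `n - 1` basis vectors. If all coordinates lie in `𝔪`, then `Soc(R)` kills
`f(M)`, hence `M`, and Nakayama's lemma shows that the cokernel needs all `n` generators.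
-/

universe u

open IsLocalRing

noncomputable def rdepth (R : Type u) [CommRing R] [IsLocalRing R]
    (M : Type u) [AddCommGroup M] [Module R M] : ℕ :=
  sSup {n : ℕ | ∃ rs : List R, rs.length = n ∧ (∀ r ∈ rs, r ∈ maximalIdeal R) ∧
    RingTheory.Sequence.IsRegular M rs}

def Deep (R : Type u) [CommRing R] [IsLocalRing R]
    (M : Type u) [AddCommGroup M] [Module R M] : Prop :=
  Module.Finite R M ∧ rdepth R R ≤ rdepth R M

def OmegaDeep (R : Type u) [CommRing R] [IsLocalRing R]
    (M : Type u) [AddCommGroup M] [Module R M] : Prop :=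
  ∃ (n : ℕ) (f : M →ₗ[R] (Fin n → R)), Function.Injective f ∧
    Deep R ((Fin n → R) ⧸ LinearMap.range f)

def DF (R : Type u) [CommRing R] [IsLocalRing R]
    (M : Type u) [AddCommGroup M] [Module R M] : Prop :=
  ∃ (n : ℕ) (f : R →ₗ[R] (Fin n → M)), Function.Injective f ∧
    Deep R ((Fin n → M) ⧸ LinearMap.range f)

def HasFreeSummand (R : Type u) [CommRing R] (M : Type u) [AddCommGroup M] [Module R M] : Prop :=
  ∃ (p : M →ₗ[R] R) (s : R →ₗ[R] M), p.comp s = LinearMap.id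

noncomputable def mu (R : Type u) [CommRing R] (M : Type u) [AddCommGroup M] [Module R M] : ℕ :=
  sInf {n : ℕ | ∃ s : Fin n → M, Submodule.span R (Set.range s) = ⊤}

abbrev ExtVanishes (R : Type u) [CommRing R] (M N : Type u) [AddCommGroup M] [Module R M]
    [AddCommGroup N] [Module R N] (i : ℕ) : Prop :=
  Subsingleton (((Ext R (ModuleCat.{u} R) i).obj
    (Opposite.op (ModuleCat.of R M))).obj (ModuleCat.of R N))

open RingTheory.Sequence Module

section Depth

variable {R : Type u} [CommRing R] [IsNoetherianRing R] [IsLocalRing R]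
  {M : Type u} [AddCommGroup M] [Module R M] [Module.Finite R M]

theorem length_le_supportDim_of_isRegular {rs : List R} (h : IsRegular M rs) :
    (rs.length : WithBot ℕ∞) ≤ supportDim R M := by
  have := h.quot_ofList_smul_nontrivial ⊤
  rw [← supportDim_add_length_eq_supportDim_of_isRegular rs h]
  obtain ⟨d, hd⟩ := WithBot.ne_bot_iff_exists.mp (supportDim_ne_bot_of_nontrivial R
    (M ⧸ Ideal.ofList rs • (⊤ : Submodule R M)))
  rw [← hd]
  exact le_add_of_nonneg_left (WithBot.coe_nonneg.mpr zero_le)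

theorem length_le_spanFinrank_maximalIdeal_of_isRegular {rs : List R} (h : IsRegular M rs) :
    rs.length ≤ (maximalIdeal R).spanFinrank := by
  have := (length_le_supportDim_of_isRegular h).trans
    ((supportDim_le_ringKrullDim R M).trans (ringKrullDim_le_spanFinrank_maximalIdeal R))
  exact_mod_cast this

theorem one_le_rdepth_of_isSMulRegular [Nontrivial M] {x : R} (hx : x ∈ maximalIdeal R)
    (hreg : IsSMulRegular M x) : 1 ≤ rdepth R M := by
  refine le_csSup ⟨(maximalIdeal R).spanFinrank, ?_⟩ ⟨[x], rfl, by simpa using hx, ?_⟩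
  · rintro n ⟨rs, rfl, -, hrs⟩
    exact length_le_spanFinrank_maximalIdeal_of_isRegular hrs
  · exact IsRegular.of_isWeaklyRegular_of_mem_maximalIdeal M (by simpa using hx)
      ((isWeaklyRegular_singleton_iff M x).mpr hreg)

theorem annihilator_maximalIdeal_ne_bot_of_rdepth_eq_zero (h : rdepth R R = 0) :
    Submodule.annihilator (maximalIdeal R) ≠ ⊥ := by
  refine (Ideal.bot_lt_annihilator_of_disjoint_nonZeroDivisors ?_).ne'
  refine Set.disjoint_left.mpr fun x hx hreg => ?_
  have := one_le_rdepth_of_isSMulRegular (M := R) hx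
    (Module.Flat.isSMulRegular_of_nonZeroDivisors hreg)
  omega

end Depth

section Summand

variable {R : Type u} [CommRing R] {M : Type u} [AddCommGroup M] [Module R M]

theorem HasFreeSummand.of_isUnit_apply {ι : Type*} {f : M →ₗ[R] ι → R} {x : M} {i : ι}
    (hu : IsUnit (f x i)) : HasFreeSummand R M := by
  refine ⟨LinearMap.proj i ∘ₗ f, LinearMap.toSpanSingleton R M (hu.unit⁻¹ • x), ?_⟩
  ext
  simp [Units.smul_def]

theorem HasFreeSummand.annihilator_eq_bot (h : HasFreeSummand R M) :
    Module.annihilator R M = ⊥ := by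
  obtain ⟨p, s, hps⟩ := h
  refine (Submodule.eq_bot_iff _).mpr fun a ha => ?_
  calc a = p (s (a • 1)) := by simpa using (LinearMap.congr_fun hps a).symm
    _ = 0 := by rw [map_smul, Module.mem_annihilator.mp ha, map_zero]

theorem exists_isUnit_apply_of_not_annihilator_maximalIdeal_le [IsLocalRing R] {ι : Type*}
    {f : M →ₗ[R] ι → R} (hf : Function.Injective f)
    (h : ¬ Submodule.annihilator (maximalIdeal R) ≤ Module.annihilator R M) :
    ∃ x i, IsUnit (f x i) := by
  by_contra! hnonunit
  refine h fun a ha => Module.mem_annihilator.mpr fun x => hf ?_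
  ext i
  simpa [mul_comm] using
    Submodule.mem_annihilator.mp ha _ ((mem_maximalIdeal _).mpr (hnonunit x i))

end Summand

section MinimalGenerators

variable {R : Type u} [CommRing R]

theorem pi_mem_smul_top {ι : Type*} [Fintype ι] [DecidableEq ι] {I : Ideal R} {v : ι → R}
    (h : ∀ i, v i ∈ I) : v ∈ I • (⊤ : Submodule R (ι → R)) := by
  rw [← (Pi.basisFun R ι).sum_repr v]
  exact Submodule.sum_mem _ fun i _ => Submodule.smul_mem_smul (h i) Submodule.mem_top

theorem span_range_mkQ_single {n : ℕ} (N : Submodule R (Fin n → R)) :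
    Submodule.span R (Set.range fun j => N.mkQ (Pi.single j 1)) = ⊤ := by
  have hrange : Set.range (fun j => N.mkQ (Pi.single j 1)) =
      N.mkQ '' Set.range (Pi.basisFun R (Fin n)) := by
    simp only [← Set.range_comp, Function.comp_def, Pi.basisFun_apply]
  rw [hrange, Submodule.span_image, (Pi.basisFun R (Fin n)).span_eq, Submodule.map_top,
    Submodule.range_mkQ]

theorem mu_le_of_span_eq_top {X : Type u} [AddCommGroup X] [Module R X] {n : ℕ} {s : Fin n → X}
    (hs : Submodule.span R (Set.range s) = ⊤) : mu R X ≤ n :=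
  Nat.sInf_le ⟨s, hs⟩

theorem mu_quotient_le {n : ℕ} (N : Submodule R (Fin n → R)) :
    mu R ((Fin n → R) ⧸ N) ≤ n :=
  mu_le_of_span_eq_top (span_range_mkQ_single N)

theorem mu_quotient_lt_of_isUnit_apply {n : ℕ} {N : Submodule R (Fin n → R)} {v : Fin n → R}
    (hv : v ∈ N) {i : Fin n} (hu : IsUnit (v i)) : mu R ((Fin n → R) ⧸ N) < n := by
  obtain ⟨m, rfl⟩ := Nat.exists_eq_add_one_of_ne_zero i.pos.ne'
  set W := Submodule.span R (Set.range fun k => N.mkQ (Pi.single (i.succAbove k) 1))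
  have hdecomp : v i • N.mkQ (Pi.single i 1) +
      ∑ k, v (i.succAbove k) • N.mkQ (Pi.single (i.succAbove k) 1) = 0 := by
    rw [← Fin.sum_univ_succAbove (fun j => v j • N.mkQ (Pi.single j 1)) i]
    simp_rw [← map_smul, ← map_sum]
    rw [show ∑ j, v j • Pi.single j 1 = v by simpa using (Pi.basisFun R _).sum_repr v]
    exact (Submodule.Quotient.mk_eq_zero N).mpr hv
  have hi : N.mkQ (Pi.single i 1) ∈ W := by
    have : v i • N.mkQ (Pi.single i 1) ∈ W := by
      rw [eq_neg_of_add_eq_zero_left hdecomp]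
      exact W.neg_mem (W.sum_mem fun k _ => W.smul_mem _ (Submodule.subset_span ⟨k, rfl⟩))
    simpa [smul_smul, Units.smul_def] using W.smul_mem ((hu.unit⁻¹ : Rˣ) : R) this
  have hW : W = ⊤ := by
    rw [eq_top_iff, ← span_range_mkQ_single N, Submodule.span_le]
    rintro _ ⟨j, rfl⟩
    rcases Fin.eq_self_or_eq_succAbove i j with rfl | ⟨k, rfl⟩
    · exact hi
    · exact Submodule.subset_span ⟨k, rfl⟩
  exact (mu_le_of_span_eq_top hW).trans_lt m.lt_succ_self

theorem le_mu_quotient_of_forall_mem_maximalIdeal [IsLocalRing R] {n : ℕ}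
    {N : Submodule R (Fin n → R)} (hN : ∀ v ∈ N, ∀ i, v i ∈ maximalIdeal R) :
    n ≤ mu R ((Fin n → R) ⧸ N) := by
  refine le_csInf ⟨n, _, span_range_mkQ_single N⟩ ?_
  rintro k ⟨s, hs⟩
  choose t ht using fun j => N.mkQ_surjective (s j)
  have hN_sup : N ⊔ Submodule.span R (Set.range t) = ⊤ := by
    rw [← Submodule.map_mkQ_eq_top, Submodule.map_span, ← Set.range_comp,
      show ⇑N.mkQ ∘ t = s from funext ht, hs]
  have hmaximal_sup : maximalIdeal R • ⊤ ⊔ Submodule.span R (Set.range t) = ⊤ :=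
    top_le_iff.mp (hN_sup.ge.trans (sup_le_sup_right
      (fun v hv => pi_mem_smul_top (hN v hv)) _))
  have hspan : Submodule.span R (Set.range t) = ⊤ :=
    IsLocalRing.map_mkQ_eq_top.mp ((Submodule.map_mkQ_eq_top _ _).mpr hmaximal_sup)
  simpa using finrank_le_of_span_eq_top hspan

end MinimalGenerators

theorem stmt_0_general (R : Type u) [CommRing R] [IsNoetherianRing R] [IsLocalRing R]
    (M : Type u) [AddCommGroup M] [Module R M]
    (hdepth : rdepth R R = 0) (hM : OmegaDeep R M) :
    List.TFAE
      [HasFreeSummand R M,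
       Module.annihilator R M = ⊥,
       ¬ (Submodule.annihilator (maximalIdeal R) ≤ Module.annihilator R M),
       ¬ ∃ (n : ℕ) (f : M →ₗ[R] (Fin n → R)), Function.Injective f ∧
           n = mu R ((Fin n → R) ⧸ LinearMap.range f)] := by
  obtain ⟨n, f, hf, -⟩ := hM
  have hsocle := annihilator_maximalIdeal_ne_bot_of_rdepth_eq_zero hdepth
  tfae_have 1 → 2 := HasFreeSummand.annihilator_eq_bot
  tfae_have 2 → 3 := fun hfaithful hle => hsocle (le_bot_iff.mp (hfaithful ▸ hle))
  tfae_have 3 → 1 := fun h => by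
    obtain ⟨x, i, hu⟩ := exists_isUnit_apply_of_not_annihilator_maximalIdeal_le hf h
    exact .of_isUnit_apply hu
  tfae_have 3 → 4 := by
    rintro h ⟨k, g, hg, hk⟩
    obtain ⟨x, i, hu⟩ := exists_isUnit_apply_of_not_annihilator_maximalIdeal_le hg h
    exact (mu_quotient_lt_of_isUnit_apply (LinearMap.mem_range_self g x) hu).ne' hk
  tfae_have 4 → 3 := by
    refine fun h hle => h ⟨n, f, hf, le_antisymm ?_ (mu_quotient_le _)⟩
    refine le_mu_quotient_of_forall_mem_maximalIdeal ?_
    rintro _ ⟨x, rfl⟩ i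
    by_contra hi
    exact hsocle (le_bot_iff.mp ((HasFreeSummand.of_isUnit_apply
      (notMem_maximalIdeal.mp hi)).annihilator_eq_bot ▸ hle))
  tfae_finish

/-- For a local ring `R` with `depth R = 0` and a nonzero finitely generated
module `M ∈ ΩDeep(R)`, the following are equivalent: (1) `M` has a free direct summand;
(2) `M` is faithful; (3) `Soc(R) ⊄ Ann(M)`; (4) `M` is not a minimal syzygy. -/
theorem stmt_0 (R : Type u) [CommRing R] [IsNoetherianRing R] [IsLocalRing R]
    (M : Type u) [AddCommGroup M] [Module R M] [Module.Finite R M] [Nontrivial M]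
    (hdepth : rdepth R R = 0) (hM : OmegaDeep R M) :
    List.TFAE
      [HasFreeSummand R M,
       Module.annihilator R M = ⊥,
       ¬ (Submodule.annihilator (maximalIdeal R) ≤ Module.annihilator R M),
       ¬ ∃ (n : ℕ) (f : M →ₗ[R] (Fin n → R)), Function.Injective f ∧
           n = mu R ((Fin n → R) ⧸ LinearMap.range f)] :=
  stmt_0_general R M hdepth hM
end

section
/- Let 0 → X → Y → Z → 0 be a short exact sequence of finitely generated R-modules. If Y ∈ ΩDeep(R) and Z ∈ Deep(R), then X ∈ ΩDeep(R). -/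
universe u

open IsLocalRing

/-!
Embed `X ↪ Y ↪ Rⁿ`. Then `0 → Z → Rⁿ/X → Rⁿ/Y → 0` is exact, and the depth of the middle term
of a short exact sequence is at least the smaller depth of the outer ones. The latter is read off
the long exact `Ext(k, -)` sequence through Rees' characterisation: for `M ≠ 0` finitely generated,
`n ≤ depth M` iff `Ext^i(k, M) = 0` for all `i < n`.
-/

open RingTheory.Sequence CategoryTheory Abelian

theorem CategoryTheory.Abelian.Ext.subsingleton_of_shortExact {C : Type*} [Category C] [Abelian C]
    [HasExt C] {S : ShortComplex C} (hS : S.ShortExact) (X : C) (n : ℕ)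
    [Subsingleton (Ext X S.X₁ n)] [Subsingleton (Ext X S.X₃ n)] :
    Subsingleton (Ext X S.X₂ n) := by
  refine subsingleton_of_forall_eq 0 fun x ↦ ?_
  obtain ⟨y, rfl⟩ := Ext.covariant_sequence_exact₂ X hS x (Subsingleton.elim _ _)
  rw [Subsingleton.elim y 0, Ext.zero_comp]

theorem exists_injective_exact_quotient_range_comp {R : Type*} [CommRing R]
    {X Y Z F : Type*} [AddCommGroup X] [Module R X] [AddCommGroup Y] [Module R Y]
    [AddCommGroup Z] [Module R Z] [AddCommGroup F] [Module R F]
    {f : X →ₗ[R] Y} {g : Y →ₗ[R] Z} (hfg : Function.Exact f g) (hg : Function.Surjective g)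
    {e : Y →ₗ[R] F} (he : Function.Injective e) :
    ∃ φ : Z →ₗ[R] F ⧸ LinearMap.range (e ∘ₗ f), Function.Injective φ ∧
      Function.Exact φ (Submodule.factor (LinearMap.range_comp_le_range f e)) := by
  set ψ := (LinearMap.range (e ∘ₗ f)).mkQ ∘ₗ e
  have hker : LinearMap.ker g = LinearMap.ker ψ := by
    rw [LinearMap.ker_comp, Submodule.ker_mkQ, LinearMap.range_comp,
      Submodule.comap_map_eq_of_injective he, hfg.linearMap_ker_eq]
  refine ⟨(LinearMap.ker g).liftQ ψ hker.le ∘ₗ (g.quotKerEquivOfSurjective hg).symm, ?_, ?_⟩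
  · exact (LinearMap.ker_eq_bot.mp (Submodule.ker_liftQ_eq_bot' _ _ hker)).comp
      (g.quotKerEquivOfSurjective hg).symm.injective
  · rw [LinearMap.exact_iff, Submodule.ker_mapQ, Submodule.comap_id, LinearEquiv.range_comp,
      Submodule.range_liftQ]
    exact (LinearMap.range_comp e _).symm

theorem exists_ringKrullDim_eq_natCast {R : Type*} [CommRing R] [FiniteRingKrullDim R] :
    ∃ d : ℕ, ringKrullDim R = d := by
  have hbot := ringKrullDim_ne_bot (R := R)
  have htop := ringKrullDim_ne_top (R := R)
  generalize ringKrullDim R = D at hbot htop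
  induction D using WithBot.recBotCoe with
  | bot => exact absurd rfl hbot
  | coe e =>
    induction e using ENat.recTopCoe with
    | top => exact absurd rfl htop
    | coe d => exact ⟨d, rfl⟩

/-- The residue field, in the `Shrink`ed form in which `ModuleCat.exists_isRegular_tfae` states
the Rees theorem. -/
noncomputable abbrev residueModule (R : Type u) [CommRing R] [IsLocalRing R] : ModuleCat.{u} R :=
  ModuleCat.of R (Shrink.{u} (R ⧸ maximalIdeal R))

def regularSequenceLengths (R : Type u) [CommRing R] [IsLocalRing R]
    (M : Type u) [AddCommGroup M] [Module R M] : Set ℕ :=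
  {n : ℕ | ∃ rs : List R, rs.length = n ∧ (∀ r ∈ rs, r ∈ maximalIdeal R) ∧ IsRegular M rs}

section

variable {R : Type u} [CommRing R] [IsLocalRing R] {M : Type u} [AddCommGroup M] [Module R M]

theorem rdepth_eq_sSup_regularSequenceLengths :
    rdepth R M = sSup (regularSequenceLengths R M) := rfl

theorem nontrivial_of_rdepth_pos (h : 0 < rdepth R M) : Nontrivial M := by
  by_contra hM
  rw [not_nontrivial_iff_subsingleton] at hM
  suffices regularSequenceLengths R M = ∅ by
    rw [rdepth_eq_sSup_regularSequenceLengths, this, csSup_empty] at h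
    exact lt_irrefl 0 h
  refine Set.eq_empty_of_forall_notMem ?_
  rintro n ⟨rs, -, -, hrs⟩
  exact not_nontrivial M hrs.nontrivial

variable [IsNoetherianRing R] [Module.Finite R M]

theorem RingTheory.Sequence.IsRegular.length_le_ringKrullDim {rs : List R} (h : IsRegular M rs) :
    (rs.length : WithBot ℕ∞) ≤ ringKrullDim R := by
  have := h.quot_ofList_smul_nontrivial ⊤
  obtain ⟨d, hd⟩ := WithBot.ne_bot_iff_exists.mp
    (Module.supportDim_ne_bot_of_nontrivial R (M ⧸ Ideal.ofList rs • (⊤ : Submodule R M)))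
  calc (rs.length : WithBot ℕ∞) ≤ ((d + rs.length : ℕ∞) : WithBot ℕ∞) := by
        exact_mod_cast le_add_self
    _ = Module.supportDim R M := by
        rw [← Module.supportDim_add_length_eq_supportDim_of_isRegular rs h, ← hd]; rfl
    _ ≤ ringKrullDim R := Module.supportDim_le_ringKrullDim R M

-- `sSup` of an unbounded subset of `ℕ` is `0`, so `rdepth` is only meaningful given this bound.
theorem bddAbove_regularSequenceLengths : BddAbove (regularSequenceLengths R M) := by
  obtain ⟨d, hd⟩ := exists_ringKrullDim_eq_natCast (R := R)
  refine ⟨d, ?_⟩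
  rintro _ ⟨rs, rfl, -, h⟩
  exact_mod_cast hd ▸ h.length_le_ringKrullDim

theorem mem_regularSequenceLengths_iff_subsingleton_ext [Nontrivial M] (n : ℕ) :
    n ∈ regularSequenceLengths R M ↔
      ∀ i < n, Subsingleton (Ext (residueModule R) (ModuleCat.of R M) i) :=
  (ModuleCat.exists_isRegular_tfae (maximalIdeal R) n (ModuleCat.of R M)
    (Submodule.top_ne_ideal_smul_of_le_jacobson_annihilator
      (maximalIdeal_le_jacobson _)).symm.lt_top).out 3 1

theorem le_rdepth_iff_subsingleton_ext [Nontrivial M] (n : ℕ) :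
    n ≤ rdepth R M ↔ ∀ i < n, Subsingleton (Ext (residueModule R) (ModuleCat.of R M) i) := by
  have hnil : 0 ∈ regularSequenceLengths R M := ⟨[], rfl, by simp, IsRegular.nil R M⟩
  rw [rdepth_eq_sSup_regularSequenceLengths]
  constructor
  · intro hn i hi
    exact (mem_regularSequenceLengths_iff_subsingleton_ext _).mp
      (Nat.sSup_mem ⟨0, hnil⟩ bddAbove_regularSequenceLengths) i (hi.trans_le hn)
  · exact fun h ↦ le_csSup bddAbove_regularSequenceLengths
      ((mem_regularSequenceLengths_iff_subsingleton_ext n).mpr h)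

end

theorem le_rdepth_of_exact {R : Type u} [CommRing R] [IsLocalRing R] [IsNoetherianRing R]
    {A B C : Type u} [AddCommGroup A] [Module R A] [Module.Finite R A]
    [AddCommGroup B] [Module R B] [Module.Finite R B]
    [AddCommGroup C] [Module R C] [Module.Finite R C]
    {f : A →ₗ[R] B} {g : B →ₗ[R] C} (hf : Function.Injective f) (hg : Function.Surjective g)
    (hfg : Function.Exact f g) {n : ℕ} (hA : n ≤ rdepth R A) (hC : n ≤ rdepth R C) :
    n ≤ rdepth R B := by
  rcases n.eq_zero_or_pos with rfl | hn
  · exact Nat.zero_le _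
  have := nontrivial_of_rdepth_pos (hn.trans_le hA)
  have := nontrivial_of_rdepth_pos (hn.trans_le hC)
  have := hf.nontrivial
  rw [le_rdepth_iff_subsingleton_ext] at hA hC ⊢
  intro i hi
  have := hA i hi
  have := hC i hi
  have hS := ModuleCat.shortComplex_shortExact
    (ModuleCat.shortComplexOfCompEqZero f g hfg.linearMap_comp_eq_zero) hfg hf hg
  exact Ext.subsingleton_of_shortExact hS (residueModule R) i

theorem stmt_1_general (R : Type u) [CommRing R] [IsNoetherianRing R] [IsLocalRing R]
    (X Y Z : Type u) [AddCommGroup X] [Module R X]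
    [AddCommGroup Y] [Module R Y]
    [AddCommGroup Z] [Module R Z] [Module.Finite R Z]
    (f : X →ₗ[R] Y) (g : Y →ₗ[R] Z)
    (hf : Function.Injective f) (hg : Function.Surjective g)
    (hfg : LinearMap.range f = LinearMap.ker g)
    (hY : OmegaDeep R Y) (hZ : Deep R Z) :
    OmegaDeep R X := by
  obtain ⟨n, e, he, hC⟩ := hY
  have : Module.Finite R ((Fin n → R) ⧸ LinearMap.range e) := hC.1
  obtain ⟨φ, hφ, hexact⟩ :=
    exists_injective_exact_quotient_range_comp (LinearMap.exact_iff.mpr hfg.symm) hg he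
  exact ⟨n, e ∘ₗ f, he.comp hf, inferInstance,
    le_rdepth_of_exact hφ (Submodule.factor_surjective _) hexact hZ.2 hC.2⟩

/-- Given a short exact sequence `0 → X → Y → Z → 0` of finitely generated
modules over a Noetherian local ring, if `Y ∈ ΩDeep(R)` and `Z ∈ Deep(R)` then `X ∈ ΩDeep(R)`. -/
theorem stmt_1 (R : Type u) [CommRing R] [IsNoetherianRing R] [IsLocalRing R]
    (X Y Z : Type u) [AddCommGroup X] [Module R X] [Module.Finite R X]
    [AddCommGroup Y] [Module R Y] [Module.Finite R Y]
    [AddCommGroup Z] [Module R Z] [Module.Finite R Z]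
    (f : X →ₗ[R] Y) (g : Y →ₗ[R] Z)
    (hf : Function.Injective f) (hg : Function.Surjective g)
    (hfg : LinearMap.range f = LinearMap.ker g)
    (hY : OmegaDeep R Y) (hZ : Deep R Z) :
    OmegaDeep R X :=
  stmt_1_general R X Y Z f g hf hg hfg hY hZ
end

section
/- Suppose M, N ∈ Deep(R) and Ext^i_R(M, N) = 0 for all 1 ≤ i ≤ t − 1. Let x₁, …, xₙ ∈ 𝔪 with n ≤ t be a sequence that is regular on R, on M, and on N, and write (−)‾ for reduction modulo (x₁, …, xₙ). Then the natural map Hom_R(M, N) ⊗_R R̄ → Hom_{R̄}(M̄, N̄) is an isomorphism when n < t, and is injective when n = t. -/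
universe u

open IsLocalRing

/-- The natural reduction map `Hom_R(M,N) → Hom_{R̄}(M̄,N̄)`, `f ↦ f̄`, where
`(-)‾` denotes reduction modulo an ideal `I` (an `R`-linear map between modules
killed by `I` is the same thing as an `R/I`-linear map). -/
noncomputable def reduceHom (R : Type u) [CommRing R] (I : Ideal R)
    (M N : Type u) [AddCommGroup M] [Module R M] [AddCommGroup N] [Module R N] :
    (M →ₗ[R] N) →ₗ[R]
      ((M ⧸ (I • ⊤ : Submodule R M)) →ₗ[R] (N ⧸ (I • ⊤ : Submodule R N))) where
  toFun f := Submodule.mapQ _ _ f (by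
    rw [← Submodule.map_le_iff_le_comap, Submodule.map_smul'']
    exact Submodule.smul_mono le_rfl le_top)
  map_add' f g := by
    apply LinearMap.ext
    intro x
    obtain ⟨x, rfl⟩ := Submodule.Quotient.mk_surjective _ x
    simp [Submodule.mapQ_apply]
  map_smul' r f := by
    apply LinearMap.ext
    intro x
    obtain ⟨x, rfl⟩ := Submodule.Quotient.mk_surjective _ x
    simp [Submodule.mapQ_apply]

/-!
Induct on the length of the sequence, replacing `N` by `N/x₁N`. What is needed from the long exact
`Ext` sequence of `0 → N → N → N/xN → 0` is checked by hand on a projective resolution of `M`: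
a cocycle with values in `N/xN` lifts to one with values in `N` when the next `Ext(M, N)`
vanishes. Hence `Ext^i(M, N) = 0` for `1 ≤ i ≤ n` gives `Ext^i(M, N/xN) = 0` for `1 ≤ i < n`,
and `Ext¹(M, N) = 0` makes `Hom(M, N) → Hom(M, N/xN)` onto; composing these surjections gives
surjectivity of the reduction map. If `f̄ = 0`, induction puts `f mod x₁` into
`(x₂, …, xₙ) Hom(M, N/x₁N)`, the image of `(x₂, …, xₙ) Hom(M, N)`; so `f - g` maps into `x₁N` for
some `g` there and is divisible by `x₁`. This needs one vanishing `Ext` fewer, which is why only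
injectivity survives when `n = t`.
-/

open CategoryTheory Limits Pointwise

section

variable {R : Type u} [CommRing R] {M N : Type u} [AddCommGroup M] [Module R M]
  [AddCommGroup N] [Module R N]

theorem IsSMulRegular.exists_smul_eq_of_mkQ_comp_eq_zero {x : R} (hx : IsSMulRegular N x)
    {A : Type*} [AddCommGroup A] [Module R A] (f : A →ₗ[R] N)
    (hf : (x • ⊤ : Submodule R N).mkQ ∘ₗ f = 0) : ∃ g : A →ₗ[R] N, x • g = f := by
  have hdiv (a : A) : ∃ n : N, x • n = f a := by
    simpa [Submodule.mem_smul_pointwise_iff_exists] using LinearMap.congr_fun hf a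
  choose g hg using hdiv
  refine ⟨⟨⟨g, fun a b => hx ?_⟩, fun r a => hx ?_⟩, LinearMap.ext hg⟩
  · simp only [smul_add, hg, map_add]
  · simp only [RingHom.id_apply, hg, smul_comm x r, map_smul]

theorem CategoryTheory.ProjectiveResolution.extVanishes_succ_iff
    (P : ProjectiveResolution (ModuleCat.of R M)) (Y : Type u) [AddCommGroup Y] [Module R Y]
    (j : ℕ) :
    ExtVanishes R M Y (j + 1) ↔
      ∀ θ : P.complex.X (j + 1) ⟶ ModuleCat.of R Y, P.complex.d (j + 2) (j + 1) ≫ θ = 0 →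
        ∃ σ : P.complex.X j ⟶ ModuleCat.of R Y, P.complex.d (j + 1) j ≫ σ = θ := by
  rw [ExtVanishes, (P.isoExt (j + 1) (ModuleCat.of R Y)).toLinearEquiv.toEquiv.subsingleton_congr,
    ← ModuleCat.isZero_iff_subsingleton, ← HomologicalComplex.exactAt_iff_isZero_homology,
    HomologicalComplex.exactAt_iff' _ j (j + 1) (j + 2) (by simp) (by simp),
    ShortComplex.moduleCat_exact_iff]
  rfl

theorem CategoryTheory.ProjectiveResolution.exists_cocycle_lift_of_extVanishes
    (P : ProjectiveResolution (ModuleCat.of R M))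
    {x : R} (hx : IsSMulRegular N x) {k : ℕ} (hE : ExtVanishes R M N (k + 1))
    (θ : P.complex.X k ⟶ ModuleCat.of R (QuotSMulTop x N))
    (hθ : P.complex.d (k + 1) k ≫ θ = 0) :
    ∃ ψ : P.complex.X k ⟶ ModuleCat.of R N, P.complex.d (k + 1) k ≫ ψ = 0 ∧
      ψ ≫ ModuleCat.ofHom (x • ⊤ : Submodule R N).mkQ = θ := by
  set q := ModuleCat.ofHom (x • ⊤ : Submodule R N).mkQ
  have : Epi q := (ModuleCat.epi_iff_surjective q).mpr (Submodule.mkQ_surjective _)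
  set ψ₀ := Projective.factorThru θ q
  have hψ₀ : ψ₀ ≫ q = θ := Projective.factorThru_comp θ q
  -- `d ψ₀` vanishes modulo `x`, so it is `x θ'` for a cocycle `θ'`, which is a coboundary `d σ`.
  obtain ⟨θ', hθ'⟩ := hx.exists_smul_eq_of_mkQ_comp_eq_zero (P.complex.d (k + 1) k ≫ ψ₀).hom
    (congrArg ModuleCat.Hom.hom (by rw [Category.assoc, hψ₀, hθ] :
      (P.complex.d (k + 1) k ≫ ψ₀) ≫ q = 0))
  have hθ'_cocycle : P.complex.d (k + 2) (k + 1) ≫ ModuleCat.ofHom θ' = 0 := by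
    ext p
    refine hx ?_
    have hdd : P.complex.d (k + 1) k (P.complex.d (k + 2) (k + 1) p) = 0 := by
      rw [← ModuleCat.comp_apply, P.complex.d_comp_d]
      rfl
    simpa [hdd] using LinearMap.congr_fun hθ' (P.complex.d (k + 2) (k + 1) p)
  obtain ⟨σ, hσ⟩ := (P.extVanishes_succ_iff N k).mp hE _ hθ'_cocycle
  refine ⟨ψ₀ - x • σ, ?_, ?_⟩
  · ext p
    have := LinearMap.congr_fun hθ' p
    have := ConcreteCategory.congr_hom hσ p
    simp_all
  · ext p
    have := ConcreteCategory.congr_hom hψ₀ p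
    simp_all [q, ← Submodule.Quotient.mk_smul,
      Submodule.smul_mem_pointwise_smul _ _ _ Submodule.mem_top]

theorem extVanishes_quotSMulTop {x : R} (hx : IsSMulRegular N x) (i : ℕ)
    (h₁ : ExtVanishes R M N (i + 1)) (h₂ : ExtVanishes R M N (i + 2)) :
    ExtVanishes R M (QuotSMulTop x N) (i + 1) := by
  let P := (HasProjectiveResolution.out (Z := ModuleCat.of R M)).some
  rw [P.extVanishes_succ_iff] at h₁ ⊢
  intro θ hθ
  obtain ⟨ψ, hψ, rfl⟩ := P.exists_cocycle_lift_of_extVanishes hx h₂ θ hθ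
  obtain ⟨τ, rfl⟩ := h₁ ψ hψ
  exact ⟨_, (Category.assoc _ _ _).symm⟩

theorem forall_extVanishes_quotSMulTop {x : R} (hx : IsSMulRegular N x) {n : ℕ}
    (hext : ∀ i, 1 ≤ i → i ≤ n → ExtVanishes R M N i) :
    ∀ i, 1 ≤ i → i < n → ExtVanishes R M (QuotSMulTop x N) i
  | i + 1, _, hi => extVanishes_quotSMulTop hx i (hext _ (by omega) (by omega))
      (hext _ (by omega) (by omega))

theorem surjective_compRight_mkQ_of_extVanishes_one {x : R} (hx : IsSMulRegular N x)
    (hE : ExtVanishes R M N 1) :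
    Function.Surjective (LinearMap.compRight R (x • ⊤ : Submodule R N).mkQ :
      (M →ₗ[R] N) →ₗ[R] M →ₗ[R] QuotSMulTop x N) := by
  intro φ
  let P := (HasProjectiveResolution.out (Z := ModuleCat.of R M)).some
  let π₀ : P.complex.X 0 ⟶ ModuleCat.of R M := P.π.f 0
  have : Epi π₀ := inferInstanceAs (Epi (P.π.f 0))
  have hπ₀ : P.complex.d (0 + 1) 0 ≫ π₀ = 0 := P.complex_d_comp_π_f_zero
  obtain ⟨ψ, hψ, hψq⟩ := P.exists_cocycle_lift_of_extVanishes hx hE (π₀ ≫ ModuleCat.ofHom φ)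
    (by rw [← Category.assoc, hπ₀, zero_comp])
  -- `ψ` kills the boundaries, so it factors through `P₀ → M`, the cokernel of `d : P₁ → P₀`.
  obtain ⟨f, hf⟩ := CokernelCofork.IsColimit.desc' P.isColimitCokernelCofork ψ hψ
  let f' : ModuleCat.of R M ⟶ ModuleCat.of R N := f
  refine ⟨f'.hom, congrArg ModuleCat.Hom.hom (?_ :
    f' ≫ ModuleCat.ofHom (x • ⊤ : Submodule R N).mkQ = ModuleCat.ofHom φ)⟩
  rw [← cancel_epi π₀, ← hψq, ← hf]
  rfl

theorem Submodule.quotOfListConsSMulTopEquivQuotSMulTopInner_comp_mkQ (x : R) (xs : List R) :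
    (quotOfListConsSMulTopEquivQuotSMulTopInner N x xs).toLinearMap ∘ₗ
        (Ideal.ofList (x :: xs) • ⊤ : Submodule R N).mkQ =
      (Ideal.ofList xs • ⊤ : Submodule R (QuotSMulTop x N)).mkQ ∘ₗ (x • ⊤ : Submodule R N).mkQ :=
  rfl

theorem smul_top_le_ker_compRight_mkQ (I : Ideal R) :
    I • ⊤ ≤ LinearMap.ker (LinearMap.compRight R (I • ⊤ : Submodule R N).mkQ :
      (M →ₗ[R] N) →ₗ[R] M →ₗ[R] N ⧸ (I • ⊤ : Submodule R N)) :=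
  Submodule.smul_le.mpr fun _ hr _ _ => LinearMap.ext fun _ =>
    (Submodule.Quotient.mk_eq_zero _).mpr (Submodule.smul_mem_smul hr Submodule.mem_top)

theorem surjective_compRight_mkQ_of_isWeaklyRegular {xs : List R}
    (hreg : RingTheory.Sequence.IsWeaklyRegular N xs)
    (hext : ∀ i, 1 ≤ i → i ≤ xs.length → ExtVanishes R M N i) :
    Function.Surjective (LinearMap.compRight R (Ideal.ofList xs • ⊤ : Submodule R N).mkQ :
      (M →ₗ[R] N) →ₗ[R] M →ₗ[R] N ⧸ (Ideal.ofList xs • ⊤ : Submodule R N)) := by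
  induction xs generalizing N with
  | nil =>
    let e := Submodule.quotEquivOfEqBot _ (by rw [Ideal.ofList_nil, Submodule.bot_smul] :
      (Ideal.ofList ([] : List R) • ⊤ : Submodule R N) = ⊥)
    exact fun φ => ⟨e.toLinearMap ∘ₗ φ, LinearMap.ext fun m => e.symm_apply_apply (φ m)⟩
  | cons x xs ih =>
    obtain ⟨hx, hreg'⟩ := (RingTheory.Sequence.isWeaklyRegular_cons_iff N x xs).mp hreg
    let e := Submodule.quotOfListConsSMulTopEquivQuotSMulTopInner N x xs
    intro φ
    obtain ⟨g, hg⟩ := ih hreg' (fun i h₁ h₂ => forall_extVanishes_quotSMulTop hx hext i h₁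
      (by simp; omega)) (e.toLinearMap ∘ₗ φ)
    obtain ⟨f, rfl⟩ := surjective_compRight_mkQ_of_extVanishes_one hx
      (hext 1 le_rfl (by simp)) g
    refine ⟨f, LinearMap.ext fun m => e.injective ?_⟩
    exact (LinearMap.congr_fun (Submodule.quotOfListConsSMulTopEquivQuotSMulTopInner_comp_mkQ x xs)
      (f m)).trans (LinearMap.congr_fun hg m)

theorem ker_compRight_mkQ_le_smul_top_of_isWeaklyRegular {xs : List R}
    (hreg : RingTheory.Sequence.IsWeaklyRegular N xs)
    (hext : ∀ i, 1 ≤ i → i < xs.length → ExtVanishes R M N i) :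
    LinearMap.ker (LinearMap.compRight R (Ideal.ofList xs • ⊤ : Submodule R N).mkQ :
      (M →ₗ[R] N) →ₗ[R] M →ₗ[R] N ⧸ (Ideal.ofList xs • ⊤ : Submodule R N)) ≤
      Ideal.ofList xs • ⊤ := by
  induction xs generalizing N with
  | nil =>
    intro f hf
    have hf0 : f = 0 := LinearMap.ext fun m => by
      simpa [Ideal.ofList_nil, Submodule.bot_smul] using LinearMap.congr_fun hf m
    simp [hf0]
  | cons x xs ih =>
    obtain ⟨hx, hreg'⟩ := (RingTheory.Sequence.isWeaklyRegular_cons_iff N x xs).mp hreg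
    let L : (M →ₗ[R] N) →ₗ[R] M →ₗ[R] QuotSMulTop x N :=
      LinearMap.compRight R (x • ⊤ : Submodule R N).mkQ
    intro f hf
    have hLf : L f ∈ Ideal.ofList xs • (⊤ : Submodule R (M →ₗ[R] QuotSMulTop x N)) :=
      ih hreg' (fun i h₁ h₂ => forall_extVanishes_quotSMulTop hx (n := xs.length)
          (fun i h₁ h₂ => hext i h₁ (by simp; omega)) i h₁ h₂)
        (LinearMap.ext fun m => by
          have hfm : (Ideal.ofList (x :: xs) • ⊤ : Submodule R N).mkQ (f m) = 0 :=
            LinearMap.congr_fun hf m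
          exact (LinearMap.congr_fun (Submodule.quotOfListConsSMulTopEquivQuotSMulTopInner_comp_mkQ
            x xs) (f m)).symm.trans (by rw [LinearMap.comp_apply, hfm, map_zero]; rfl))
    have hmap : Ideal.ofList xs • (⊤ : Submodule R (M →ₗ[R] QuotSMulTop x N)) =
        (Ideal.ofList xs • ⊤ : Submodule R (M →ₗ[R] N)).map L := by
      rw [Submodule.map_smul'', Submodule.map_top]
      rcases xs with _ | ⟨y, ys⟩
      · simp [Ideal.ofList_nil, Submodule.bot_smul]
      · rw [LinearMap.range_eq_top.mpr (surjective_compRight_mkQ_of_extVanishes_one hx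
          (hext 1 le_rfl (by simp)))]
    rw [hmap] at hLf
    obtain ⟨g, hg, hLg⟩ := hLf
    obtain ⟨h, hh⟩ := hx.exists_smul_eq_of_mkQ_comp_eq_zero (f - g)
      (by rw [LinearMap.comp_sub]; exact sub_eq_zero.mpr hLg.symm)
    have hx_mem : x ∈ Ideal.ofList (x :: xs) := Ideal.subset_span List.mem_cons_self
    have hxs : Ideal.ofList xs ≤ Ideal.ofList (x :: xs) :=
      Ideal.span_mono fun r hr => List.mem_cons_of_mem x hr
    rw [show f = x • h + g by rw [hh, sub_add_cancel]]
    exact Submodule.add_mem _ (Submodule.smul_mem_smul hx_mem Submodule.mem_top)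
      (Submodule.smul_mono_left hxs hg)

theorem ker_reduceHom (I : Ideal R) :
    LinearMap.ker (reduceHom R I M N) =
      LinearMap.ker (LinearMap.compRight R (I • ⊤ : Submodule R N).mkQ :
        (M →ₗ[R] N) →ₗ[R] M →ₗ[R] N ⧸ (I • ⊤ : Submodule R N)) := by
  ext f
  simp only [LinearMap.mem_ker]
  exact ⟨fun h => LinearMap.ext fun m => LinearMap.congr_fun h (Submodule.Quotient.mk m),
    fun h => Submodule.linearMap_qext _ (LinearMap.ext fun m => LinearMap.congr_fun h m)⟩

theorem surjective_reduceHom_of_surjective_compRight_mkQ {I : Ideal R}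
    (h : Function.Surjective (LinearMap.compRight R (I • ⊤ : Submodule R N).mkQ :
      (M →ₗ[R] N) →ₗ[R] M →ₗ[R] N ⧸ (I • ⊤ : Submodule R N))) :
    Function.Surjective (reduceHom R I M N) := by
  intro φ
  obtain ⟨f, hf⟩ := h (φ ∘ₗ (I • ⊤ : Submodule R M).mkQ)
  refine ⟨f, ?_⟩
  ext m
  exact LinearMap.congr_fun hf m

end

theorem stmt_3_general (R : Type u) [CommRing R] [IsLocalRing R]
    (M N : Type u) [AddCommGroup M] [Module R M]
    [AddCommGroup N] [Module R N]
    (hext : ∀ i : ℕ, 1 ≤ i → i ≤ rdepth R R - 1 → ExtVanishes R M N i)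
    (xs : List R)
    (hregN : RingTheory.Sequence.IsRegular N xs) :
    (xs.length < rdepth R R →
      Function.Surjective (reduceHom R (Ideal.ofList xs) M N) ∧
      LinearMap.ker (reduceHom R (Ideal.ofList xs) M N)
        = (Ideal.ofList xs • ⊤ : Submodule R (M →ₗ[R] N))) ∧
    (xs.length = rdepth R R →
      LinearMap.ker (reduceHom R (Ideal.ofList xs) M N)
        = (Ideal.ofList xs • ⊤ : Submodule R (M →ₗ[R] N))) := by
  have hker (hE : ∀ i, 1 ≤ i → i < xs.length → ExtVanishes R M N i) :
      LinearMap.ker (reduceHom R (Ideal.ofList xs) M N) = Ideal.ofList xs • ⊤ := by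
    rw [ker_reduceHom]
    exact le_antisymm (ker_compRight_mkQ_le_smul_top_of_isWeaklyRegular hregN.toIsWeaklyRegular hE)
      (smul_top_le_ker_compRight_mkQ _)
  refine ⟨fun hlt => ⟨?_, hker fun i h₁ h₂ => hext i h₁ (by omega)⟩,
    fun heq => hker fun i h₁ h₂ => hext i h₁ (by omega)⟩
  exact surjective_reduceHom_of_surjective_compRight_mkQ
    (surjective_compRight_mkQ_of_isWeaklyRegular hregN.toIsWeaklyRegular
      fun i h₁ h₂ => hext i h₁ (by omega))

/-- Suppose `M, N ∈ Deep(R)` and `Ext^i(M,N) = 0` for `1 ≤ i ≤ t-1`,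
`t = depth R`.  Let `x₁, …, xₙ ∈ 𝔪` with `n ≤ t` be a sequence regular on `R`, `M` and `N`,
and let `I = (x₁, …, xₙ)`.  The natural map `Hom_R(M,N) ⊗ R̄ → Hom_{R̄}(M̄,N̄)` is an
isomorphism when `n < t` and injective when `n = t`.  (Identifying
`Hom_R(M,N) ⊗ R̄ = Hom_R(M,N)/I·Hom_R(M,N)`, the map being an isomorphism is expressed as:
`reduceHom` is surjective with kernel exactly `I • ⊤`; it being injective is expressed as:
the kernel of `reduceHom` is exactly `I • ⊤`.) -/
theorem stmt_3 (R : Type u) [CommRing R] [IsNoetherianRing R] [IsLocalRing R]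
    (M N : Type u) [AddCommGroup M] [Module R M] [Module.Finite R M]
    [AddCommGroup N] [Module R N] [Module.Finite R N]
    (hM : Deep R M) (hN : Deep R N)
    (hext : ∀ i : ℕ, 1 ≤ i → i ≤ rdepth R R - 1 → ExtVanishes R M N i)
    (xs : List R) (hle : xs.length ≤ rdepth R R)
    (hmem : ∀ x ∈ xs, x ∈ maximalIdeal R)
    (hregR : RingTheory.Sequence.IsRegular R xs)
    (hregM : RingTheory.Sequence.IsRegular M xs)
    (hregN : RingTheory.Sequence.IsRegular N xs) :
    (xs.length < rdepth R R →
      Function.Surjective (reduceHom R (Ideal.ofList xs) M N) ∧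
      LinearMap.ker (reduceHom R (Ideal.ofList xs) M N)
        = (Ideal.ofList xs • ⊤ : Submodule R (M →ₗ[R] N))) ∧
    (xs.length = rdepth R R →
      LinearMap.ker (reduceHom R (Ideal.ofList xs) M N)
        = (Ideal.ofList xs • ⊤ : Submodule R (M →ₗ[R] N))) :=
  stmt_3_general R M N hext xs hregN
end

section
/- Suppose R is a Cohen-Macaulay local ring of Krull dimension d ≤ 1, and M is a nonzero finitely generated maximal Cohen-Macaulay R-module. If M* = Hom_R(M, R) is a free R-module, then M is a free R-module. -/
universe u

open IsLocalRing

/-!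
Let `e : M → M**` be the evaluation map. As `M*` is free, it is reflexive, so the transpose
`e* : M*** → M*` is bijective. Injectivity of `e*` kills every functional on `coker e`, and
surjectivity of `e*` kills every functional on `ker e` once `e` splits.

If `dim R = 0`, then `𝔪` is an associated prime of `R`, so every nonzero finite module maps
nontrivially to `R`; hence `coker e = 0`. If `dim R = 1`, pick an `R`-regular `z ∈ 𝔪`: then `𝔪`
is associated to `R/z`, and lifting a map `coker e → R/z` to `M** → R` and dividing by `z` along
`e` shows that it vanishes, so again `coker e = 0`. Thus `e` is a split surjection onto a free
module.

Because `M` is maximal Cohen–Macaulay and `dim R ≤ 1`, every associated prime of `M`, hence of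
the summand `ker e`, is a minimal prime `p` of `R`. Localizing at `p` gives an artinian local ring,
over which `(ker e)_p` would have a nonzero dual; as duals of finitely presented modules localize,
this contradicts `(ker e)* = 0`. So `e` is an isomorphism.
-/

open IsLocalRing Module

lemma exists_isSMulRegular_of_rdepth_ne_zero {R M : Type u} [CommRing R] [IsLocalRing R]
    [AddCommGroup M] [Module R M] (h : rdepth R M ≠ 0) :
    ∃ y ∈ maximalIdeal R, IsSMulRegular M y := by
  set S := {n : ℕ | ∃ rs : List R, rs.length = n ∧ (∀ r ∈ rs, r ∈ maximalIdeal R) ∧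
    RingTheory.Sequence.IsRegular M rs}
  have hdepth : rdepth R M = sSup S := rfl
  have hne : S.Nonempty := Set.nonempty_iff_ne_empty.mpr fun hS ↦ h (by simp [hdepth, hS])
  have hbdd : BddAbove S := not_not.mp fun hS ↦ h (hdepth ▸ Nat.sSup_of_not_bddAbove hS)
  obtain ⟨rs, hlen, hm, hreg⟩ := Nat.sSup_mem hne hbdd
  cases rs with
  | nil => exact absurd hlen.symm h
  | cons y rs =>
    exact ⟨y, hm y List.mem_cons_self,
      ((RingTheory.Sequence.isRegular_cons_iff M y rs).mp hreg).1⟩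

variable {R : Type*} [CommRing R]

section Dimension

variable [IsLocalRing R]

lemma mem_minimalPrimes_of_ne_maximalIdeal (hdim : ringKrullDim R ≤ 1) {p : Ideal R} [p.IsPrime]
    (hp : p ≠ maximalIdeal R) : p ∈ minimalPrimes R := by
  have hlt : p < maximalIdeal R := lt_of_le_of_ne (le_maximalIdeal Ideal.IsPrime.ne_top') hp
  have hm : (maximalIdeal R).height ≤ 1 := by
    exact_mod_cast maximalIdeal_height_eq_ringKrullDim (R := R) ▸ hdim
  rw [← Ideal.height_eq_zero_iff, ← nonpos_iff_eq_zero]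
  exact (ENat.add_le_add_iff_right ENat.one_ne_top).mp
    ((Ideal.height_add_one_le_of_lt_of_isPrime hlt).trans (by simpa using hm))

lemma eq_maximalIdeal_of_isSMulRegular_mem (hdim : ringKrullDim R ≤ 1) {z : R}
    (hz : IsSMulRegular R z) {p : Ideal R} [p.IsPrime] (hzp : z ∈ p) : p = maximalIdeal R := by
  by_contra hp
  refine hz.notMem_of_mem_minimalPrimes ?_ hzp
  rw [Module.annihilator_eq_bot.mpr inferInstance]
  exact mem_minimalPrimes_of_ne_maximalIdeal hdim hp

variable [IsNoetherianRing R]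

lemma associatedPrimes_subset_minimalPrimes_of_isSMulRegular {M : Type*} [AddCommGroup M]
    [Module R M] (hdim : ringKrullDim R ≤ 1) {y : R} (hym : y ∈ maximalIdeal R)
    (hy : IsSMulRegular M y) : associatedPrimes R M ⊆ minimalPrimes R := by
  intro p hp
  have := hp.isPrime
  refine mem_minimalPrimes_of_ne_maximalIdeal hdim fun hpm ↦ ?_
  have hy' : y ∈ ⋃ p ∈ associatedPrimes R M, p := Set.mem_biUnion hp (hpm ▸ hym)
  rw [biUnion_associatedPrimes_eq_compl_regular] at hy'
  exact hy' hy

lemma maximalIdeal_mem_associatedPrimes_self [Ring.KrullDimLE 0 R] :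
    maximalIdeal R ∈ associatedPrimes R R := by
  obtain ⟨p, hp⟩ := associatedPrimes.nonempty R R
  have := hp.isPrime
  rwa [← Ring.KrullDimLE.eq_maximalIdeal_of_isPrime p]

lemma maximalIdeal_mem_associatedPrimes_quotient (hdim : ringKrullDim R ≤ 1) {z : R}
    (hzm : z ∈ maximalIdeal R) (hz : IsSMulRegular R z) :
    maximalIdeal R ∈ associatedPrimes R (R ⧸ Ideal.span {z}) := by
  have : Nontrivial (R ⧸ Ideal.span {z}) := Ideal.Quotient.nontrivial_iff.mpr <| by
    rwa [Ne, Ideal.span_singleton_eq_top, ← mem_nonunits_iff, ← mem_maximalIdeal]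
  obtain ⟨p, hp⟩ := associatedPrimes.nonempty R (R ⧸ Ideal.span {z})
  have := hp.isPrime
  have hzp : z ∈ p := hp.annihilator_le <| by
    rw [Submodule.annihilator_top, Ideal.annihilator_quotient]
    exact Ideal.mem_span_singleton_self z
  rwa [← eq_maximalIdeal_of_isSMulRegular_mem hdim hz hzp]

-- A nonzero `C` surjects onto the residue field, which embeds into `T`.
lemma subsingleton_of_forall_linearMap_eq_zero {T C : Type*} [AddCommGroup T] [Module R T]
    [AddCommGroup C] [Module R C] [Module.Finite R C]
    (hT : maximalIdeal R ∈ associatedPrimes R T) (hC : ∀ g : C →ₗ[R] T, g = 0) :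
    Subsingleton C := by
  refine not_nontrivial_iff_subsingleton.mp fun _ ↦ ?_
  obtain ⟨-, i, hi⟩ := (isAssociatedPrime_iff_exists_injective_linearMap _ _).mp hT
  obtain ⟨N, hN⟩ := IsCoatomic.exists_coatom (Submodule R C)
  have : IsSimpleModule R (C ⧸ N) := isSimpleModule_iff_isCoatom.mpr hN
  obtain ⟨I, hI, ⟨e⟩⟩ := isSimpleModule_iff_quot_maximal.mp this
  obtain rfl := eq_maximalIdeal hI
  obtain ⟨x, hx⟩ := exists_ne (0 : R ⧸ maximalIdeal R)
  obtain ⟨c, rfl⟩ := (e.surjective.comp N.mkQ_surjective) x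
  exact hx (hi (by simpa using LinearMap.congr_fun (hC (i ∘ₗ e.toLinearMap ∘ₗ N.mkQ)) c))

end Dimension

lemma exists_dual_ne_zero_of_mem_minimalPrimes [IsNoetherianRing R] {K : Type*} [AddCommGroup K]
    [Module R K] [Module.Finite R K] {p : Ideal R} (hpK : p ∈ associatedPrimes R K)
    (hp : p ∈ minimalPrimes R) : ∃ f : K →ₗ[R] R, f ≠ 0 := by
  have := hp.isPrime
  let A := Localization.AtPrime p
  have : Ring.KrullDimLE 0 A := .of_isLocalization p hp A
  have : IsNoetherianRing A := IsLocalization.isNoetherianRing p.primeCompl A inferInstance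
  have : Module.FinitePresentation R K := Module.finitePresentation_of_finite R K
  have hKp := associatedPrimes.mem_associatedPrimes_atPrime_of_mem_associatedPrimes hpK
  by_contra! h
  have hdual (g : LocalizedModule.AtPrime p K →ₗ[A] A) : g = 0 := by
    obtain ⟨⟨f, s⟩, hfs⟩ := IsLocalizedModule.mk'_surjective p.primeCompl
      (IsLocalizedModule.map p.primeCompl (LocalizedModule.mkLinearMap p.primeCompl K)
        (Algebra.linearMap R A)) (g.restrictScalars R)
    rw [h f, Function.uncurry_apply_pair, IsLocalizedModule.mk'_zero] at hfs
    exact LinearMap.ext fun x ↦ (LinearMap.congr_fun hfs x).symm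
  have := subsingleton_of_forall_linearMap_eq_zero maximalIdeal_mem_associatedPrimes_self hdual
  simp [associatedPrimes.eq_empty_of_subsingleton] at hKp

lemma bijective_dualMap_dual_eval (M : Type*) [AddCommGroup M] [Module R M]
    [IsReflexive R (Dual R M)] : Function.Bijective (Dual.eval R M).dualMap := by
  have hinv : Function.LeftInverse (Dual.eval R M).dualMap (Dual.eval R (Dual R M)) :=
    fun _ ↦ rfl
  exact Function.bijective_iff_has_inverse.mpr
    ⟨_, hinv.rightInverse_of_surjective (bijective_dual_eval R (Dual R M)).2, hinv⟩

section DualMap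

variable {M F : Type*} [AddCommGroup M] [Module R M] [AddCommGroup F] [Module R F]
  {e : M →ₗ[R] F}

lemma eq_zero_of_injective_dualMap (he : Function.Injective e.dualMap)
    (g : (F ⧸ LinearMap.range e) →ₗ[R] R) : g = 0 := by
  have : g ∘ₗ (LinearMap.range e).mkQ = 0 := he <| LinearMap.ext fun m ↦ by
    simp [LinearMap.dualMap_apply,
      (Submodule.Quotient.mk_eq_zero _).mpr (LinearMap.mem_range_self e m)]
  exact Submodule.linearMap_qext _ (by simpa using this)

lemma eq_zero_of_bijective_dualMap_of_isSMulRegular [Projective R F]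
    (he : Function.Bijective e.dualMap) {z : R} (hz : IsSMulRegular R z)
    (g : (F ⧸ LinearMap.range e) →ₗ[R] R ⧸ Ideal.span {z}) : g = 0 := by
  obtain ⟨H, hH⟩ := Module.projective_lifting_property (Ideal.span {z}).mkQ
    (g ∘ₗ (LinearMap.range e).mkQ) (Ideal.span {z}).mkQ_surjective
  have hHe (m : M) : H (e m) ∈ LinearMap.range (LinearMap.toSpanSingleton R R z) := by
    rw [← LinearMap.span_singleton_eq_range, ← Submodule.Quotient.mk_eq_zero,
      ← Submodule.mkQ_apply, ← LinearMap.comp_apply, hH]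
    simp [(Submodule.Quotient.mk_eq_zero _).mpr (LinearMap.mem_range_self e m)]
  have hzinj : Function.Injective (LinearMap.toSpanSingleton R R z) := fun a b hab ↦
    hz (by simpa [mul_comm] using hab)
  let G : Dual R M := (LinearEquiv.ofInjective _ hzinj).symm.toLinearMap ∘ₗ
    (H ∘ₗ e).codRestrict _ hHe
  have hG (m : M) : z * G m = H (e m) := by
    rw [mul_comm, ← smul_eq_mul, ← LinearMap.toSpanSingleton_apply]
    exact congrArg Subtype.val ((LinearEquiv.ofInjective _ hzinj).apply_symm_apply _)
  obtain ⟨Φ, hΦ⟩ := he.2 G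
  have hHΦ : H = z • Φ := sub_eq_zero.mp <| he.1 <| LinearMap.ext fun m ↦ by
    simp [LinearMap.dualMap_apply, ← hG, ← hΦ]
  refine Submodule.linearMap_qext _ (LinearMap.ext fun x ↦ ?_)
  have := LinearMap.congr_fun hH x
  simp only [LinearMap.comp_apply, Submodule.mkQ_apply] at this
  simp [← this, hHΦ]

lemma eq_zero_of_surjective_dualMap [Projective R F] (hs : Function.Surjective e)
    (he : Function.Surjective e.dualMap) (f : LinearMap.ker e →ₗ[R] R) : f = 0 := by
  obtain ⟨σ, hσ⟩ := Module.projective_lifting_property e LinearMap.id hs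
  let r : M →ₗ[R] LinearMap.ker e := (LinearMap.id - σ ∘ₗ e).codRestrict _ fun m ↦ by
    simp [LinearMap.mem_ker, ← LinearMap.comp_apply e σ, hσ]
  have hr (x : LinearMap.ker e) : r x = x := Subtype.ext (by simp [r, LinearMap.mem_ker.mp x.2])
  obtain ⟨Φ, hΦ⟩ := he (f ∘ₗ r)
  ext x
  simpa [hr, LinearMap.mem_ker.mp x.2, LinearMap.dualMap_apply] using
    (LinearMap.congr_fun hΦ x).symm

lemma injective_of_surjective_dualMap [IsNoetherianRing R] [Module.Finite R M] [Projective R F]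
    (hM : associatedPrimes R M ⊆ minimalPrimes R) (hs : Function.Surjective e)
    (he : Function.Surjective e.dualMap) : Function.Injective e := by
  rw [← LinearMap.ker_eq_bot]
  by_contra hker
  have := Submodule.nontrivial_iff_ne_bot.mpr hker
  obtain ⟨p, hp⟩ := associatedPrimes.nonempty R (LinearMap.ker e)
  obtain ⟨f, hf⟩ := exists_dual_ne_zero_of_mem_minimalPrimes hp
    (hM (associatedPrimes.subset_of_injective (LinearMap.ker e).injective_subtype hp))
  exact hf (eq_zero_of_surjective_dualMap hs he f)

end DualMap

theorem stmt_12_general (R : Type u) [CommRing R] [IsNoetherianRing R] [IsLocalRing R]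
    (hCM : ((rdepth R R : ℕ∞) : WithBot ℕ∞) = ringKrullDim R)
    (hdim : ringKrullDim R ≤ 1)
    (M : Type u) [AddCommGroup M] [Module R M] [Module.Finite R M]
    (hMCM : ((rdepth R M : ℕ∞) : WithBot ℕ∞) = ringKrullDim R)
    (hdual : Module.Free R (M →ₗ[R] R)) :
    Module.Free R M := by
  have : Module.Free R (Dual R M) := hdual
  have he := bijective_dualMap_dual_eval (R := R) M
  have hdepth : rdepth R R ≤ 1 := by exact_mod_cast hCM ▸ hdim
  obtain ⟨hsurj, hAss⟩ : Function.Surjective (Dual.eval R M) ∧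
      associatedPrimes R M ⊆ minimalPrimes R := by
    rw [← LinearMap.range_eq_top, ← Submodule.Quotient.subsingleton_iff]
    rcases Nat.le_one_iff_eq_zero_or_eq_one.mp hdepth with h0 | h1
    · have : Ring.KrullDimLE 0 R := Ring.krullDimLE_iff.mpr (by rw [← hCM, h0]; rfl)
      exact ⟨subsingleton_of_forall_linearMap_eq_zero maximalIdeal_mem_associatedPrimes_self
        (eq_zero_of_injective_dualMap he.1),
        fun p hp ↦ Ideal.mem_minimalPrimes_iff_isPrime.mpr hp.isPrime⟩
    · have hM : rdepth R M = rdepth R R := by exact_mod_cast hMCM.trans hCM.symm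
      obtain ⟨z, hzm, hz⟩ := exists_isSMulRegular_of_rdepth_ne_zero (R := R) (M := R) (by omega)
      obtain ⟨y, hym, hy⟩ := exists_isSMulRegular_of_rdepth_ne_zero (R := R) (M := M) (by omega)
      exact ⟨subsingleton_of_forall_linearMap_eq_zero
        (maximalIdeal_mem_associatedPrimes_quotient hdim hzm hz)
        (eq_zero_of_bijective_dualMap_of_isSMulRegular he hz),
        associatedPrimes_subset_minimalPrimes_of_isSMulRegular hdim hym hy⟩
  exact Module.Free.of_equiv (LinearEquiv.ofBijective _
    ⟨injective_of_surjective_dualMap hAss hsurj he.2, hsurj⟩).symm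

/-- Suppose `R` is a Cohen-Macaulay local ring of Krull dimension `≤ 1`
and `M` is a nonzero finitely generated maximal Cohen-Macaulay module.
If `M* = Hom_R(M,R)` is free, then `M` is free. -/
theorem stmt_12 (R : Type u) [CommRing R] [IsNoetherianRing R] [IsLocalRing R]
    (hCM : ((rdepth R R : ℕ∞) : WithBot ℕ∞) = ringKrullDim R)
    (hdim : ringKrullDim R ≤ 1)
    (M : Type u) [AddCommGroup M] [Module R M] [Module.Finite R M] [Nontrivial M]
    (hMCM : ((rdepth R M : ℕ∞) : WithBot ℕ∞) = ringKrullDim R)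
    (hdual : Module.Free R (M →ₗ[R] R)) :
    Module.Free R M :=
  stmt_12_general R hCM hdim M hMCM hdual
end
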